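/- Let G be a group in which every abelian subgroup is finitely generated. If G has the Abelian intersection property (AIP), then every element of the center of G has finite order. -/

import Mathlib

open scoped TensorProduct

/-- The torsion-free rank of a subgroup `A`, i.e. the dimension of the
`ℚ`-vector space `A ⊗_ℤ ℚ` (for abelian `A`, computed via the abelianization,
which is isomorphic to `A` in that case). -/
noncomputable def subgroupRank {G : Type*} [Group G] (A : Subgroup G) : Cardinal :=
  Module.rank ℚ (ℚ ⊗[ℤ] Additive (Abelianization A))

/-- An abelian subgroup `A ≤ G` is highest if no finite-index subgroup of `A`
is contained in an abelian subgroup of `G` of strictly greater rank. -/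
def IsHighestAbelian {G : Type*} [Group G] (A : Subgroup G) : Prop :=
  IsMulCommutative A ∧
    ∀ B C : Subgroup G, B ≤ A → B.relIndex A ≠ 0 → IsMulCommutative C → B ≤ C →
      ¬ subgroupRank A < subgroupRank C

/-- `G` has the Abelian intersection property (AIP) if there exist finitely many
highest abelian subgroups of `G` whose intersection is the trivial subgroup. -/
def HasAIP (G : Type*) [Group G] : Prop :=
  ∃ (k : ℕ) (A : Fin k → Subgroup G),
    (∀ i, IsHighestAbelian (A i)) ∧ (⨅ i, A i) = ⊥

/-!
If a central element `g` had no nonzero power in a highest abelian subgroup `A`, then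
`(a, n) ↦ a * g ^ n` would embed `A × ℤ` into `G`; its image is abelian, contains `A`, and has
rank `rank A + 1`, which exceeds `rank A` because `A` is finitely generated. So `g` has a nonzero
power `g ^ nᵢ` in each `Aᵢ`, and `g ^ (∏ nᵢ)` lies in `⋂ Aᵢ = 1`.
-/

open scoped IsMulCommutative

section RationalRank

universe u
variable {M N : Type u} [AddCommGroup M] [AddCommGroup N]

lemma rank_rat_tensor_congr (e : M ≃+ N) :
    Module.rank ℚ (ℚ ⊗[ℤ] M) = Module.rank ℚ (ℚ ⊗[ℤ] N) :=
  (e.toIntLinearEquiv.baseChange ℤ ℚ M N).rank_eq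

lemma rank_rat_tensor_prod_int :
    Module.rank ℚ (ℚ ⊗[ℤ] (M × ℤ)) = Module.rank ℚ (ℚ ⊗[ℤ] M) + 1 := by
  rw [((TensorProduct.prodRight ℤ ℚ ℚ M ℤ).trans
    ((LinearEquiv.refl ℚ _).prodCongr (TensorProduct.AlgebraTensorModule.rid ℤ ℚ ℚ))).rank_eq,
    rank_prod, Module.rank_self]
  simp

lemma rank_rat_tensor_lt_aleph0 [Module.Finite ℤ M] :
    Module.rank ℚ (ℚ ⊗[ℤ] M) < Cardinal.aleph0 :=
  Module.rank_lt_aleph0 ℚ _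

end RationalRank

section SubgroupRank

variable {G : Type*} [Group G]

lemma subgroupRank_eq_rank_rat_tensor (A : Subgroup G) [IsMulCommutative A] :
    subgroupRank A = Module.rank ℚ (ℚ ⊗[ℤ] Additive A) :=
  rank_rat_tensor_congr (MulEquiv.toAdditive (Abelianization.equivOfComm (H := A))).symm

lemma subgroupRank_lt_aleph0 {A : Subgroup G} [IsMulCommutative A] (hA : A.FG) :
    subgroupRank A < Cardinal.aleph0 := by
  have : Group.FG A := (Group.fg_iff_subgroup_fg A).mpr hA
  have : Module.Finite ℤ (Additive A) := Module.Finite.iff_addGroup_fg.mpr inferInstance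
  rw [subgroupRank_eq_rank_rat_tensor]
  exact rank_rat_tensor_lt_aleph0

lemma subgroupRank_range_eq_add_one {A : Subgroup G} [IsMulCommutative A]
    {f : A × Multiplicative ℤ →* G} (hf : Function.Injective f) :
    subgroupRank f.range = subgroupRank A + 1 := by
  rw [subgroupRank_eq_rank_rat_tensor, subgroupRank_eq_rank_rat_tensor,
    ← rank_rat_tensor_prod_int]
  exact rank_rat_tensor_congr
    ((MulEquiv.toAdditive (MonoidHom.ofInjective hf).symm).trans (AddEquiv.prodAdditive _ _))

end SubgroupRank

section CentralExtension

variable {G : Type*} [Group G]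

def Subgroup.prodZPowersHom (A : Subgroup G) {g : G} (hg : g ∈ Subgroup.center G) :
    A × Multiplicative ℤ →* G :=
  A.subtype.noncommCoprod (zpowersHom G g) fun _ n =>
    Subgroup.mem_center_iff.mp (zpow_mem hg n.toAdd) _

@[simp]
lemma Subgroup.prodZPowersHom_apply (A : Subgroup G) {g : G} (hg : g ∈ Subgroup.center G)
    (a : A) (n : Multiplicative ℤ) : A.prodZPowersHom hg (a, n) = a * g ^ n.toAdd :=
  rfl

lemma Subgroup.prodZPowersHom_injective (A : Subgroup G) {g : G} (hg : g ∈ Subgroup.center G)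
    (hA : ∀ n : ℤ, n ≠ 0 → g ^ n ∉ A) : Function.Injective (A.prodZPowersHom hg) := by
  refine (injective_iff_map_eq_one _).mpr fun ⟨a, n⟩ h => ?_
  rw [prodZPowersHom_apply] at h
  have hn : n.toAdd = 0 := by
    by_contra hn
    exact hA _ hn (by rw [eq_inv_of_mul_eq_one_right h]; exact inv_mem a.2)
  have ha : (a : G) = 1 := by simpa [hn] using h
  exact Prod.ext (Subtype.ext ha) (Multiplicative.toAdd.injective hn)

lemma IsHighestAbelian.exists_zpow_mem_of_mem_center {A : Subgroup G} (hA : IsHighestAbelian A)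
    (hfg : A.FG) {g : G} (hg : g ∈ Subgroup.center G) : ∃ n : ℤ, n ≠ 0 ∧ g ^ n ∈ A := by
  by_contra! hno
  have := hA.1
  have hinj := A.prodZPowersHom_injective hg hno
  have hle : A ≤ (A.prodZPowersHom hg).range := fun a ha => ⟨(⟨a, ha⟩, 1), by simp⟩
  refine hA.2 A _ le_rfl (by simp) inferInstance hle ?_
  rw [subgroupRank_range_eq_add_one hinj]
  obtain ⟨r, hr⟩ := Cardinal.lt_aleph0.mp (subgroupRank_lt_aleph0 hfg)
  rw [hr]
  exact_mod_cast Nat.lt_succ_self r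

end CentralExtension

/-- If every abelian subgroup of `G` is finitely generated and `G` has AIP, then
every central element of `G` has finite order. -/
theorem center_torsion_of_hasAIP {G : Type*} [Group G]
    (hab : ∀ A : Subgroup G, IsMulCommutative A → A.FG)
    (h : HasAIP G) :
    ∀ g ∈ Subgroup.center G, IsOfFinOrder g := by
  intro g hg
  obtain ⟨k, A, hhigh, hinf⟩ := h
  choose n hn hmem using fun i =>
    (hhigh i).exists_zpow_mem_of_mem_center (hab _ (hhigh i).1) hg
  have hN : g ^ (∏ i, n i) ∈ ⨅ i, A i :=
    Subgroup.mem_iInf.mpr fun i => by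
      obtain ⟨c, hc⟩ := Finset.dvd_prod_of_mem n (Finset.mem_univ i)
      rw [hc, zpow_mul]
      exact zpow_mem (hmem i) c
  rw [hinf, Subgroup.mem_bot] at hN
  exact isOfFinOrder_iff_zpow_eq_one.mpr ⟨_, Finset.prod_ne_zero_iff.mpr fun i _ => hn i, hN⟩
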